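/- arXiv:2209.11164 — 2 statements merged into one kernel-verified Lean document; each statement's English description precedes it below -/
import Mathlib

section
/- Let P be column stochastic and irreducible with invariant distribution μ. Then ‖P − μ𝟙ᵀ‖_{1/μ} < 1 if and only if PᵀP is irreducible. -/
open Matrix BigOperators

/-- A matrix is column stochastic: nonnegative entries, each column sums to one. -/
def ColStoch {m : Type*} [Fintype m] (M : Matrix m m ℝ) : Prop :=
  (∀ i j, 0 ≤ M i j) ∧ ∀ j, ∑ i, M i j = 1

/-- Irreducibility of a matrix via its pattern of nonzero entries:
the associated directed graph is strongly connected. -/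
def Irred {m : Type*} [Fintype m] [DecidableEq m] (M : Matrix m m ℝ) : Prop :=
  ∀ i j, ∃ k : ℕ, 0 < k ∧ (M ^ k) i j ≠ 0

/-- Weighted inner product `⟨x,y⟩_w = ∑ i, x i * y i * w i`. -/
def innerW {m : Type*} [Fintype m] (w x y : m → ℝ) : ℝ := ∑ i, x i * y i * w i

/-- Weighted `ℓ²(w)` norm. -/
noncomputable def normW {m : Type*} [Fintype m] (w x : m → ℝ) : ℝ :=
  Real.sqrt (innerW w x x)

/-- Operator norm of a matrix with respect to the `ℓ²(w)` norm. -/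
noncomputable def opNormW {m : Type*} [Fintype m] (w : m → ℝ) (M : Matrix m m ℝ) : ℝ :=
  sInf {c | 0 ≤ c ∧ ∀ x, normW w (M.mulVec x) ≤ c * normW w x}

/-- Aggregation operator for the partition `{f⁻¹(i)}` of `Fin N`. -/
def Agg {N n : ℕ} (f : Fin N → Fin n) : Matrix (Fin n) (Fin N) ℝ :=
  fun i x => if f x = i then 1 else 0

/-- Disaggregation operator for the partition `{f⁻¹(i)}` and weight vector ν. -/
noncomputable def Disagg {N n : ℕ} (f : Fin N → Fin n) (ν : Fin N → ℝ) :
    Matrix (Fin N) (Fin n) ℝ :=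
  fun j i => if f j = i then ν j / (Agg f).mulVec ν i else 0

/-- Coarse approximation `C(ν) = A P D(ν)`. -/
noncomputable def CoarseC {N n : ℕ} (P : Matrix (Fin N) (Fin N) ℝ) (f : Fin N → Fin n)
    (ν : Fin N → ℝ) : Matrix (Fin n) (Fin n) ℝ := Agg f * P * Disagg f ν

/-- `P̂ = P - μ 𝟙ᵀ`. -/
def hatP {N : ℕ} (P : Matrix (Fin N) (Fin N) ℝ) (μ : Fin N → ℝ) :
    Matrix (Fin N) (Fin N) ℝ := P - vecMulVec μ 1

/-- Coarse projection `S(ν) = D(ν)[A(I-P+μ𝟙ᵀ)D(ν)]⁻¹ A(I-P+μ𝟙ᵀ)`. -/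
noncomputable def CoarseS {N n : ℕ} (P : Matrix (Fin N) (Fin N) ℝ) (f : Fin N → Fin n)
    (μ ν : Fin N → ℝ) : Matrix (Fin N) (Fin N) ℝ :=
  Disagg f ν * (Agg f * (1 - P + vecMulVec μ 1) * Disagg f ν)⁻¹ *
    (Agg f * (1 - P + vecMulVec μ 1))

/-- Orthogonal coarse projection `Π(ν) = D(ν) A`. -/
noncomputable def PiProj {N n : ℕ} (f : Fin N → Fin n) (ν : Fin N → ℝ) :
    Matrix (Fin N) (Fin N) ℝ := Disagg f ν * Agg f

/-- Error propagation operator `J(ν) = P̂ (I - S(ν))`. -/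
noncomputable def Jop {N n : ℕ} (P : Matrix (Fin N) (Fin N) ℝ) (f : Fin N → Fin n)
    (μ ν : Fin N → ℝ) : Matrix (Fin N) (Fin N) ℝ := hatP P μ * (1 - CoarseS P f μ ν)

/-- Spectrum (set of complex eigenvalues) of a real matrix. -/
noncomputable def specC {N : ℕ} (M : Matrix (Fin N) (Fin N) ℝ) : Set ℂ :=
  spectrum ℂ (M.map (Complex.ofReal))

/-- Spectral radius of a real matrix. -/
noncomputable def specRad {N : ℕ} (M : Matrix (Fin N) (Fin N) ℝ) : ℝ :=
  sSup ((fun z : ℂ => ‖z‖) '' specC M)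

/-- The `ℓ²(1/μ)`-adjoint `diag(μ) Mᵀ diag(1/μ)`. -/
noncomputable def adjW {N : ℕ} (μ : Fin N → ℝ) (M : Matrix (Fin N) (Fin N) ℝ) :
    Matrix (Fin N) (Fin N) ℝ :=
  Matrix.diagonal μ * Mᵀ * Matrix.diagonal (fun i => (μ i)⁻¹)

/-- The ε-inner product `⟨x,y⟩_ε = ⟨x,(I-Π(μ))y⟩_{1/μ} + ε ⟨x,Π(μ)y⟩_{1/μ}`. -/
noncomputable def innerEps {N n : ℕ} (f : Fin N → Fin n) (μ : Fin N → ℝ) (ε : ℝ)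
    (x y : Fin N → ℝ) : ℝ :=
  innerW (fun i => (μ i)⁻¹) x ((1 - PiProj f μ).mulVec y) +
    ε * innerW (fun i => (μ i)⁻¹) x ((PiProj f μ).mulVec y)

/-- The ε-norm. -/
noncomputable def normEps {N n : ℕ} (f : Fin N → Fin n) (μ : Fin N → ℝ) (ε : ℝ)
    (x : Fin N → ℝ) : ℝ := Real.sqrt (innerEps f μ ε x x)

/-- Operator norm induced by the ε-norm. -/
noncomputable def opNormEps {N n : ℕ} (f : Fin N → Fin n) (μ : Fin N → ℝ) (ε : ℝ)
    (M : Matrix (Fin N) (Fin N) ℝ) : ℝ :=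
  sInf {c | 0 ≤ c ∧ ∀ x, normEps f μ ε (M.mulVec x) ≤ c * normEps f μ ε x}

/-! Write `x = μ * y`. Because `P μ = μ` and the columns of `P` sum to one, twice the loss
`‖x‖² - ‖P x‖²` in `ℓ²(1/μ)` is the Dirichlet energy
`∑ᵢ μᵢ⁻¹ ∑ⱼ ∑ₖ Pᵢⱼ μⱼ Pᵢₖ μₖ (yⱼ - yₖ)²`, which vanishes exactly when `y` is constant along the
edges of `PᵀP`. Since `P̂ x = P (x - (∑ x) μ)` and `x - (∑ x) μ` is the `ℓ²(1/μ)`-orthogonal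
projection of `x` off `μ`, `P̂` is a contraction, and it preserves the norm of some `x ≠ 0` iff
some nonconstant `y` is constant along the edges of `PᵀP`, i.e. iff `PᵀP` is reducible. In finite
dimension a strict contraction has norm `< 1`, by compactness of the unit sphere. -/

open Finset

section WeightedNorm

variable {ι : Type*} [Fintype ι] {w : ι → ℝ}

lemma innerW_self_nonneg (hw : ∀ i, 0 ≤ w i) (x : ι → ℝ) : 0 ≤ innerW w x x :=
  sum_nonneg fun i _ => mul_nonneg (mul_self_nonneg _) (hw i)

lemma innerW_smul (c : ℝ) (x : ι → ℝ) : innerW w (c • x) (c • x) = c ^ 2 * innerW w x x := by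
  simp only [innerW, mul_sum, Pi.smul_apply, smul_eq_mul]
  exact sum_congr rfl fun i _ => by ring

lemma normW_smul (c : ℝ) (x : ι → ℝ) : normW w (c • x) = |c| * normW w x := by
  rw [normW, innerW_smul, Real.sqrt_mul (sq_nonneg c), Real.sqrt_sq_eq_abs, normW]

lemma normW_eq_zero_iff (hw : ∀ i, 0 < w i) {x : ι → ℝ} : normW w x = 0 ↔ x = 0 := by
  rw [normW, Real.sqrt_eq_zero (innerW_self_nonneg (fun i => (hw i).le) x), innerW,
    sum_eq_zero_iff_of_nonneg fun i _ => mul_nonneg (mul_self_nonneg _) (hw i).le]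
  simp [funext_iff, (hw _).ne']

lemma normW_nonneg (x : ι → ℝ) : 0 ≤ normW w x := Real.sqrt_nonneg _

lemma normW_le_normW_iff (hw : ∀ i, 0 ≤ w i) {x y : ι → ℝ} :
    normW w x ≤ normW w y ↔ innerW w x x ≤ innerW w y y :=
  Real.sqrt_le_sqrt_iff (innerW_self_nonneg hw y)

lemma continuous_normW : Continuous (normW w) :=
  Real.continuous_sqrt.comp (continuous_finsetSum _ fun i _ => by fun_prop)

lemma opNormW_le {M : Matrix ι ι ℝ} {c : ℝ} (hc : 0 ≤ c)
    (h : ∀ x, normW w (M *ᵥ x) ≤ c * normW w x) : opNormW w M ≤ c :=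
  csInf_le ⟨0, fun _ hc => hc.1⟩ ⟨hc, h⟩

lemma normW_mulVec_le_opNormW_mul {M : Matrix ι ι ℝ} {c : ℝ} (hc : 0 ≤ c)
    (h : ∀ x, normW w (M *ᵥ x) ≤ c * normW w x) (x : ι → ℝ) :
    normW w (M *ᵥ x) ≤ opNormW w M * normW w x := by
  rcases (normW_nonneg (w := w) x).eq_or_lt with hx | hx
  · simpa [← hx] using h x
  · rw [← div_le_iff₀ hx]
    exact le_csInf ⟨c, hc, h⟩ fun c' hc' => (div_le_iff₀ hx).2 (hc'.2 x)

lemma opNormW_lt_one (hw : ∀ i, 0 < w i) {M : Matrix ι ι ℝ}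
    (h : ∀ x, x ≠ 0 → normW w (M *ᵥ x) < normW w x) : opNormW w M < 1 := by
  have hpos : ∀ x : ι → ℝ, x ≠ 0 → 0 < normW w x := fun x hx =>
    (normW_nonneg x).lt_of_ne' ((normW_eq_zero_iff hw).not.2 hx)
  set ratio : (ι → ℝ) → ℝ := fun x => normW w (M *ᵥ x) / normW w x
  have hratio_smul : ∀ (c : ℝ) x, c ≠ 0 → ratio (c • x) = ratio x := fun c x hc => by
    simp only [ratio, Matrix.mulVec_smul, normW_smul]
    exact mul_div_mul_left _ _ (abs_ne_zero.2 hc)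
  obtain ⟨t, ht0, ht1, hbound⟩ : ∃ t, 0 ≤ t ∧ t < 1 ∧
      ∀ x ∈ Metric.sphere (0 : ι → ℝ) 1, ratio x ≤ t := by
    rcases (Metric.sphere (0 : ι → ℝ) 1).eq_empty_or_nonempty with hK | hK
    · exact ⟨0, le_rfl, one_pos, by simp [hK]⟩
    have hne : ∀ x ∈ Metric.sphere (0 : ι → ℝ) 1, x ≠ 0 := fun x hx =>
      ne_zero_of_mem_unit_sphere ⟨x, hx⟩
    have hcont : ContinuousOn ratio (Metric.sphere 0 1) :=
      (continuous_normW.comp (continuous_const.matrix_mulVec continuous_id)).continuousOn.div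
        continuous_normW.continuousOn fun x hx => (hpos x (hne x hx)).ne'
    obtain ⟨x₀, hx₀, hmax⟩ := (isCompact_sphere 0 1).exists_isMaxOn hK hcont
    exact ⟨ratio x₀, div_nonneg (normW_nonneg _) (normW_nonneg _),
      (div_lt_one (hpos x₀ (hne x₀ hx₀))).2 (h x₀ (hne x₀ hx₀)), hmax⟩
  refine (opNormW_le ht0 fun x => ?_).trans_lt ht1
  rcases eq_or_ne x 0 with rfl | hx
  · simp [normW, innerW]
  have hx_ratio : ratio x ≤ t := by
    rw [← hratio_smul ‖x‖⁻¹ x (inv_ne_zero (norm_ne_zero_iff.2 hx))]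
    exact hbound _ (by rw [mem_sphere_zero_iff_norm, norm_smul, norm_inv, norm_norm,
      inv_mul_cancel₀ (norm_ne_zero_iff.2 hx)])
  exact (div_le_iff₀ (hpos x hx)).1 hx_ratio

end WeightedNorm

section Irreducible

variable {ι : Type*} [Fintype ι] [DecidableEq ι] {M : Matrix ι ι ℝ} {y : ι → ℝ}

lemma eq_of_pow_apply_ne_zero (hy : ∀ j k, M j k ≠ 0 → y j = y k) :
    ∀ n i j, (M ^ n) i j ≠ 0 → y i = y j
  | 0, i, j, h => by
    by_contra hne
    exact h (Matrix.one_apply_ne fun hij => hne (hij ▸ rfl))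
  | n + 1, i, j, h => by
    rw [pow_succ, Matrix.mul_apply] at h
    obtain ⟨l, -, hl⟩ := exists_ne_zero_of_sum_ne_zero h
    exact (eq_of_pow_apply_ne_zero hy n i l (left_ne_zero_of_mul hl)).trans
      (hy l j (right_ne_zero_of_mul hl))

lemma Irred.eq_of_forall_ne_zero (hM : Irred M) (hy : ∀ j k, M j k ≠ 0 → y j = y k)
    (i j : ι) : y i = y j :=
  let ⟨n, _, hn⟩ := hM i j
  eq_of_pow_apply_ne_zero hy n i j hn

lemma irred_of_forall_eq (hnn : ∀ i j, 0 ≤ M i j) (hsymm : M.IsSymm) (hdiag : ∀ i, M i i ≠ 0)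
    (h : ∀ y : ι → ℝ, (∀ j k, M j k ≠ 0 → y j = y k) → ∀ i j, y i = y j) : Irred M := by
  intro i j
  set S : Set ι := {l | ∃ n, 0 < n ∧ (M ^ n) i l ≠ 0}
  have hclosed : ∀ a b, a ∈ S → M a b ≠ 0 → b ∈ S := by
    rintro a b ⟨n, -, ha⟩ hab
    refine ⟨n + 1, n.succ_pos, ?_⟩
    rw [pow_succ, Matrix.mul_apply]
    refine (sum_pos' (fun l _ => mul_nonneg (Matrix.pow_apply_nonneg hnn n i l) (hnn l b))
      ⟨a, mem_univ a, mul_pos ((Matrix.pow_apply_nonneg hnn n i a).lt_of_ne' ha)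
        ((hnn a b).lt_of_ne' hab)⟩).ne'
  classical
  have hconst := h (fun l => if l ∈ S then 1 else 0) (fun a b hab => by
    have hba : M b a ≠ 0 := hsymm.apply a b ▸ hab
    by_cases ha : a ∈ S
    · simp [ha, hclosed a b ha hab]
    · simp [ha, mt (hclosed b a · hba) ha]) i j
  have hi : i ∈ S := ⟨1, one_pos, by simpa using hdiag i⟩
  exact (by simpa [hi] using hconst : j ∈ S)

end Irreducible

lemma exists_eq_mul_of_ne_zero {ι : Type*} {μ : ι → ℝ} (hμ : ∀ i, μ i ≠ 0) (x : ι → ℝ) :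
    ∃ y, x = μ * y :=
  ⟨x / μ, funext fun j => (mul_div_cancel₀ _ (hμ j)).symm⟩

section Stochastic

variable {ι : Type*} [Fintype ι] {P : Matrix ι ι ℝ} {μ : ι → ℝ}

lemma sum_sum_mul_mul_sub_sq (a y : ι → ℝ) :
    ∑ j, ∑ k, a j * a k * (y j - y k) ^ 2
      = 2 * ((∑ j, a j) * ∑ j, a j * y j ^ 2 - (∑ j, a j * y j) ^ 2) := by
  have h : ∀ j k, a j * a k * (y j - y k) ^ 2
      = a j * y j ^ 2 * a k + a j * (a k * y k ^ 2) - 2 * (a j * y j) * (a k * y k) := by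
    intro j k; ring
  simp only [h, sum_add_distrib, sum_sub_distrib, ← mul_sum, ← sum_mul]
  ring

lemma transpose_mul_self_apply_nonneg (hP : ∀ i j, 0 ≤ P i j) (j k : ι) :
    0 ≤ (Pᵀ * P) j k :=
  sum_nonneg fun i _ => mul_nonneg (hP i j) (hP i k)

lemma transpose_mul_self_apply_ne_zero_iff (hP : ∀ i j, 0 ≤ P i j) (j k : ι) :
    (Pᵀ * P) j k ≠ 0 ↔ ∃ i, P i j ≠ 0 ∧ P i k ≠ 0 := by
  simp only [Matrix.mul_apply, Matrix.transpose_apply, ne_eq,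
    sum_eq_zero_iff_of_nonneg fun i _ => mul_nonneg (hP i j) (hP i k), mem_univ, true_implies,
    not_forall, mul_eq_zero, not_or]

lemma ColStoch.transpose_mul_self_apply_self_ne_zero (hP : ColStoch P) (j : ι) :
    (Pᵀ * P) j j ≠ 0 := by
  obtain ⟨i, -, hij⟩ := exists_ne_zero_of_sum_ne_zero ((hP.2 j).symm ▸ one_ne_zero)
  exact (transpose_mul_self_apply_ne_zero_iff hP.1 j j).2 ⟨i, hij, hij⟩

noncomputable def dirichletEnergy (P : Matrix ι ι ℝ) (μ y : ι → ℝ) : ℝ :=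
  ∑ i, (μ i)⁻¹ * ∑ j, ∑ k, P i j * μ j * (P i k * μ k) * (y j - y k) ^ 2

lemma dirichletEnergy_nonneg (hP : ∀ i j, 0 ≤ P i j) (hμ : ∀ i, 0 < μ i) (y : ι → ℝ) :
    0 ≤ dirichletEnergy P μ y :=
  sum_nonneg fun i _ => mul_nonneg (inv_nonneg.2 (hμ i).le) <| sum_nonneg fun j _ =>
    sum_nonneg fun k _ => mul_nonneg (mul_nonneg (mul_nonneg (hP i j) (hμ j).le)
      (mul_nonneg (hP i k) (hμ k).le)) (sq_nonneg _)

lemma dirichletEnergy_eq_zero_iff (hP : ∀ i j, 0 ≤ P i j) (hμ : ∀ i, 0 < μ i) (y : ι → ℝ) :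
    dirichletEnergy P μ y = 0 ↔ ∀ j k, (Pᵀ * P) j k ≠ 0 → y j = y k := by
  have hterm : ∀ i j k, 0 ≤ P i j * μ j * (P i k * μ k) * (y j - y k) ^ 2 := fun i j k =>
    mul_nonneg (mul_nonneg (mul_nonneg (hP i j) (hμ j).le) (mul_nonneg (hP i k) (hμ k).le))
      (sq_nonneg _)
  have hinner : ∀ i, 0 ≤ ∑ j, ∑ k, P i j * μ j * (P i k * μ k) * (y j - y k) ^ 2 :=
    fun i => sum_nonneg fun j _ => sum_nonneg fun k _ => hterm i j k
  constructor
  · intro h j k hjk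
    obtain ⟨i, hij, hik⟩ := (transpose_mul_self_apply_ne_zero_iff hP j k).1 hjk
    have hi := (sum_eq_zero_iff_of_nonneg fun i _ =>
      mul_nonneg (inv_nonneg.2 (hμ i).le) (hinner i)).1 h i (mem_univ i)
    have hij' := (sum_eq_zero_iff_of_nonneg fun j _ => sum_nonneg fun k _ => hterm i j k).1
      ((mul_eq_zero.1 hi).resolve_left (inv_ne_zero (hμ i).ne')) j (mem_univ j)
    have hijk := (sum_eq_zero_iff_of_nonneg fun k _ => hterm i j k).1 hij' k (mem_univ k)
    simpa [hij, hik, (hμ j).ne', (hμ k).ne', sub_eq_zero] using hijk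
  · intro h
    refine sum_eq_zero fun i _ => mul_eq_zero_of_right _ <|
      sum_eq_zero fun j _ => sum_eq_zero fun k _ => ?_
    by_cases hjk : (Pᵀ * P) j k = 0
    · rcases eq_or_ne (P i j) 0 with hij | hij
      · simp [hij]
      have hik : P i k = 0 := by
        by_contra hik
        exact (transpose_mul_self_apply_ne_zero_iff hP j k).2 ⟨i, hij, hik⟩ hjk
      simp [hik]
    · simp [h j k hjk]

lemma two_mul_innerW_sub_innerW_mulVec (hcol : ∀ j, ∑ i, P i j = 1) (hμ : ∀ i, 0 < μ i)
    (hPμ : P *ᵥ μ = μ) (y : ι → ℝ) :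
    2 * (innerW (fun i => (μ i)⁻¹) (μ * y) (μ * y)
        - innerW (fun i => (μ i)⁻¹) (P *ᵥ (μ * y)) (P *ᵥ (μ * y)))
      = dirichletEnergy P μ y := by
  have hrow : ∀ i, ∑ j, P i j * μ j = μ i := fun i => congrFun hPμ i
  have hPx : ∀ i, (P *ᵥ (μ * y)) i = ∑ j, P i j * μ j * y j := fun i =>
    sum_congr rfl fun j _ => by simp only [Pi.mul_apply]; ring
  have hmass : innerW (fun i => (μ i)⁻¹) (μ * y) (μ * y) = ∑ i, ∑ j, P i j * μ j * y j ^ 2 := by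
    rw [sum_comm]
    refine sum_congr rfl fun j _ => ?_
    rw [← sum_mul, ← sum_mul, hcol, one_mul, Pi.mul_apply]
    field_simp [(hμ j).ne']
  rw [hmass, innerW, ← sum_sub_distrib, mul_sum, dirichletEnergy]
  refine sum_congr rfl fun i _ => ?_
  rw [sum_sum_mul_mul_sub_sq (fun j => P i j * μ j), hrow, hPx]
  field_simp [(hμ i).ne']

lemma innerW_mulVec_le (hP : ColStoch P) (hμ : ∀ i, 0 < μ i) (hPμ : P *ᵥ μ = μ) (x : ι → ℝ) :
    innerW (fun i => (μ i)⁻¹) (P *ᵥ x) (P *ᵥ x) ≤ innerW (fun i => (μ i)⁻¹) x x := by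
  obtain ⟨y, rfl⟩ := exists_eq_mul_of_ne_zero (fun i => (hμ i).ne') x
  have := two_mul_innerW_sub_innerW_mulVec hP.2 hμ hPμ y
  linarith [dirichletEnergy_nonneg hP.1 hμ y]

lemma innerW_mulVec_eq_iff (hP : ColStoch P) (hμ : ∀ i, 0 < μ i) (hPμ : P *ᵥ μ = μ)
    (y : ι → ℝ) :
    innerW (fun i => (μ i)⁻¹) (P *ᵥ (μ * y)) (P *ᵥ (μ * y))
        = innerW (fun i => (μ i)⁻¹) (μ * y) (μ * y)
      ↔ ∀ j k, (Pᵀ * P) j k ≠ 0 → y j = y k := by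
  rw [← dirichletEnergy_eq_zero_iff hP.1 hμ, ← two_mul_innerW_sub_innerW_mulVec hP.2 hμ hPμ]
  constructor <;> intro h <;> linarith

lemma innerW_eq_innerW_sub_smul_add_sq (hμ : ∀ i, 0 < μ i) (hμsum : ∑ i, μ i = 1)
    (x : ι → ℝ) :
    innerW (fun i => (μ i)⁻¹) x x
      = innerW (fun i => (μ i)⁻¹) (x - (∑ i, x i) • μ) (x - (∑ i, x i) • μ)
        + (∑ i, x i) ^ 2 := by
  set s := ∑ i, x i
  have hterm : ∀ i, (x i - s * μ i) * (x i - s * μ i) * (μ i)⁻¹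
      = x i * x i * (μ i)⁻¹ - 2 * s * x i + s ^ 2 * μ i := fun i => by
    field_simp [(hμ i).ne']
    ring
  simp only [innerW, Pi.sub_apply, Pi.smul_apply, smul_eq_mul, hterm, sum_add_distrib,
    sum_sub_distrib, ← mul_sum, hμsum]
  ring

end Stochastic

section Centering

variable {N : ℕ} {P : Matrix (Fin N) (Fin N) ℝ} {μ : Fin N → ℝ}

lemma hatP_mulVec (hPμ : P *ᵥ μ = μ) (x : Fin N → ℝ) :
    hatP P μ *ᵥ x = P *ᵥ (x - (∑ i, x i) • μ) := by
  rw [hatP, Matrix.sub_mulVec, Matrix.vecMulVec_mulVec, op_smul_eq_smul, Matrix.mulVec_sub,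
    Matrix.mulVec_smul, hPμ]
  simp [dotProduct]

lemma normW_hatP_mulVec_le (hP : ColStoch P) (hμ : ∀ i, 0 < μ i) (hμsum : ∑ i, μ i = 1)
    (hPμ : P *ᵥ μ = μ) (x : Fin N → ℝ) :
    normW (fun i => (μ i)⁻¹) (hatP P μ *ᵥ x) ≤ normW (fun i => (μ i)⁻¹) x := by
  rw [normW_le_normW_iff fun i => (inv_pos.2 (hμ i)).le, hatP_mulVec hPμ,
    innerW_eq_innerW_sub_smul_add_sq hμ hμsum x]
  linarith [innerW_mulVec_le hP hμ hPμ (x - (∑ i, x i) • μ), sq_nonneg (∑ i, x i)]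

lemma eq_of_opNormW_hatP_lt_one (hP : ColStoch P) (hμ : ∀ i, 0 < μ i) (hμsum : ∑ i, μ i = 1)
    (hPμ : P *ᵥ μ = μ) (hlt : opNormW (fun i => (μ i)⁻¹) (hatP P μ) < 1) {y : Fin N → ℝ}
    (hy : ∀ j k, (Pᵀ * P) j k ≠ 0 → y j = y k) (i j : Fin N) : y i = y j := by
  set c := ∑ j, μ j * y j
  set x : Fin N → ℝ := μ * fun j => y j - c
  have hx_sum : ∑ j, x j = 0 := by
    simp only [x, Pi.mul_apply, mul_sub, sum_sub_distrib, ← sum_mul, hμsum, one_mul, c, sub_self]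
  have hiso : normW (fun i => (μ i)⁻¹) (hatP P μ *ᵥ x) = normW (fun i => (μ i)⁻¹) x := by
    rw [hatP_mulVec hPμ, hx_sum, zero_smul, sub_zero, normW, normW,
      (innerW_mulVec_eq_iff hP hμ hPμ _).2 fun j k hjk => by rw [hy j k hjk]]
  have hle := normW_mulVec_le_opNormW_mul zero_le_one
    (fun x => (one_mul (normW _ x)).symm ▸ normW_hatP_mulVec_le hP hμ hμsum hPμ x) x
  rw [hiso] at hle
  have hx : x = 0 := (normW_eq_zero_iff fun i => inv_pos.2 (hμ i)).1 <|
    le_antisymm (by nlinarith [normW_nonneg (w := fun i => (μ i)⁻¹) x]) (normW_nonneg x)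
  have hyc : ∀ l, y l = c := fun l => by
    simpa [x, (hμ l).ne', sub_eq_zero] using congrFun hx l
  rw [hyc i, hyc j]

lemma normW_hatP_mulVec_lt (hP : ColStoch P) (hμ : ∀ i, 0 < μ i) (hμsum : ∑ i, μ i = 1)
    (hPμ : P *ᵥ μ = μ) (hirr : Irred (Pᵀ * P)) {x : Fin N → ℝ} (hx : x ≠ 0) :
    normW (fun i => (μ i)⁻¹) (hatP P μ *ᵥ x) < normW (fun i => (μ i)⁻¹) x := by
  obtain ⟨y, rfl⟩ := exists_eq_mul_of_ne_zero (fun i => (hμ i).ne') x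
  by_contra hge
  rw [not_lt, normW_le_normW_iff fun i => (inv_pos.2 (hμ i)).le, hatP_mulVec hPμ] at hge
  set s := ∑ i, (μ * y) i
  have hpyth := innerW_eq_innerW_sub_smul_add_sq hμ hμsum (μ * y)
  have hcontr := innerW_mulVec_le hP hμ hPμ (μ * y - s • μ)
  have hs : s = 0 := by nlinarith [sq_nonneg s]
  rw [hs, zero_smul, sub_zero] at hge hcontr
  have hconst := hirr.eq_of_forall_ne_zero
    ((innerW_mulVec_eq_iff hP hμ hPμ y).1 (le_antisymm hcontr hge))
  have hy : ∀ i, y i = s := fun i => by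
    rw [show s = ∑ j, μ j * y i from sum_congr rfl fun j _ => by rw [Pi.mul_apply, hconst j i],
      ← sum_mul, hμsum, one_mul]
  exact hx (funext fun i => by simp [hy i, hs])

end Centering

theorem stmt4_general {N : ℕ} (P : Matrix (Fin N) (Fin N) ℝ)
    (μ : Fin N → ℝ) (hP : ColStoch P)
    (hμpos : ∀ i, 0 < μ i) (hμsum : ∑ i, μ i = 1) (hinv : P.mulVec μ = μ) :
    opNormW (fun i => (μ i)⁻¹) (hatP P μ) < 1 ↔ Irred (Pᵀ * P) := by
  constructor
  · intro hlt
    exact irred_of_forall_eq (transpose_mul_self_apply_nonneg hP.1)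
      (Matrix.isSymm_transpose_mul_self P) hP.transpose_mul_self_apply_self_ne_zero
      fun y hy => eq_of_opNormW_hatP_lt_one hP hμpos hμsum hinv hlt hy
  · intro hirr
    exact opNormW_lt_one (fun i => inv_pos.2 (hμpos i)) fun x hx =>
      normW_hatP_mulVec_lt hP hμpos hμsum hinv hirr hx

/-- `‖P̂‖_{1/μ} < 1` if and only if `PᵀP` is irreducible. -/
theorem stmt4 {N : ℕ} (P : Matrix (Fin N) (Fin N) ℝ)
    (μ : Fin N → ℝ) (hP : ColStoch P) (hirr : Irred P)
    (hμpos : ∀ i, 0 < μ i) (hμsum : ∑ i, μ i = 1) (hinv : P.mulVec μ = μ) :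
    opNormW (fun i => (μ i)⁻¹) (hatP P μ) < 1 ↔ Irred (Pᵀ * P) :=
  stmt4_general P μ hP hμpos hμsum hinv
end

section
/- Let P be column stochastic irreducible with invariant distribution μ, and let ν > 0 be a probability vector. Then A(I − P + μ𝟙ᵀ)D(ν) is invertible, and S(ν) := D(ν)[A(I − P + μ𝟙ᵀ)D(ν)]^{−1} A(I − P + μ𝟙ᵀ) is a projection (S(ν)² = S(ν)) whose range equals the range of D(ν). -/
open Matrix BigOperators

/-!
The coarse operator `A(I − P + μ𝟙ᵀ)D(ν)` equals `I − C + (Aμ)𝟙ᵀ` with `C = APD(ν)`, because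
`AD(ν) = I` and `𝟙ᵀD(ν) = 𝟙ᵀ`. The matrix `C` is column stochastic, and irreducible because every
positive entry `P a b` makes `C (f a) (f b)` positive. If `(I − C + w𝟙ᵀ)x = 0` with `𝟙ᵀw = 1`,
applying `𝟙ᵀ` gives `𝟙ᵀx = 0`, so `x` is a fixed vector of `C` with zero sum. Such an `x`
vanishes: otherwise `|x|` is fixed as well, and the nonnegative fixed vector `|x| − x` is zero
where `x > 0` but not where `x < 0`, contradicting irreducibility. Once `MD` is invertible,
`D(MD)⁻¹M` is an idempotent with the range of `D`.
-/

lemma ColStoch.mem_colStochastic {m : Type*} [Fintype m] [DecidableEq m] {M : Matrix m m ℝ}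
    (h : ColStoch M) : M ∈ colStochastic ℝ m :=
  mem_colStochastic_iff_sum.2 h

lemma Irred.isIrreducible {m : Type*} [Fintype m] [DecidableEq m] {M : Matrix m m ℝ}
    (h0 : ∀ i j, 0 ≤ M i j) (h : Irred M) : M.IsIrreducible :=
  (isIrreducible_iff_exists_pow_pos h0).2 fun i j =>
    let ⟨k, hk, hne⟩ := h i j
    ⟨k, hk, (pow_apply_nonneg h0 k i j).lt_of_ne' hne⟩

namespace Matrix

lemma pow_mulVec_of_mulVec_eq_self {m R : Type*} [Fintype m] [DecidableEq m] [Semiring R]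
    {M : Matrix m m R} {x : m → R} (hx : M *ᵥ x = x) (t : ℕ) : (M ^ t) *ᵥ x = x := by
  induction t with
  | zero => simp
  | succ t ih => rw [pow_succ, ← mulVec_mulVec, hx, ih]

lemma mul_apply_nonneg {l m o R : Type*} [Fintype m] [Semiring R] [PartialOrder R]
    [IsOrderedRing R] {A : Matrix l m R} {B : Matrix m o R} (hA : ∀ i j, 0 ≤ A i j)
    (hB : ∀ i j, 0 ≤ B i j) (i : l) (k : o) : 0 ≤ (A * B) i k :=
  Finset.sum_nonneg fun j _ => mul_nonneg (hA i j) (hB j k)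

theorem IsIrreducible.of_surjective {m k R : Type*} [Ring R] [LinearOrder R]
    {M : Matrix m m R} {C : Matrix k k R} (hM : M.IsIrreducible) (hC : ∀ i j, 0 ≤ C i j)
    {g : m → k} (hg : Function.Surjective g) (hpos : ∀ i j, 0 < M i j → 0 < C (g i) (g j)) :
    C.IsIrreducible := by
  let := toQuiver M
  let := toQuiver C
  let F : Prefunctor m k := { obj := g, map := fun e => ⟨hpos _ _ e.down⟩ }
  have hlen : ∀ {i j : m} (p : Quiver.Path i j), (F.mapPath p).length = p.length := by
    intro i j p
    induction p with
    | nil => rfl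
    | cons p e ih => simp [ih]
  refine ⟨hC, fun a b => ?_⟩
  obtain ⟨i, rfl⟩ := hg a
  obtain ⟨j, rfl⟩ := hg b
  obtain ⟨p, hp⟩ := hM.connected i j
  exact ⟨F.mapPath p, (hlen p).symm ▸ hp⟩

section Stochastic

variable {m : Type*} [Fintype m] [DecidableEq m] {M : Matrix m m ℝ} {x : m → ℝ}

lemma mulVec_abs_of_mulVec_eq_self (hM : M ∈ colStochastic ℝ m) (hx : M *ᵥ x = x) :
    M *ᵥ |x| = |x| := by
  have hle : ∀ i, |x| i ≤ (M *ᵥ |x|) i := fun i =>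
    calc |x| i = |(M *ᵥ x) i| := by rw [hx, Pi.abs_apply]
      _ ≤ ∑ l, |M i l * x l| := Finset.abs_sum_le_sum_abs _ _
      _ = (M *ᵥ |x|) i := by
        simp [mulVec, dotProduct, abs_mul, abs_of_nonneg (nonneg_of_mem_colStochastic hM)]
  have heq := (Finset.sum_eq_sum_iff_of_le fun i _ => hle i).1
    (sum_mulVec_of_mem_colStochastic hM).symm
  exact funext fun i => (heq i (Finset.mem_univ i)).symm

theorem eq_zero_of_mulVec_eq_self (hM : M ∈ colStochastic ℝ m) (hirr : M.IsIrreducible)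
    (hx : M *ᵥ x = x) (hsum : ∑ i, x i = 0) : x = 0 := by
  by_contra hne
  obtain ⟨j₀, hj₀⟩ := Function.ne_iff.1 hne
  obtain ⟨i, -, hi⟩ := Finset.exists_pos_of_sum_zero_of_exists_nonzero x hsum
    ⟨j₀, Finset.mem_univ _, hj₀⟩
  obtain ⟨j, -, hj⟩ := Finset.exists_pos_of_sum_zero_of_exists_nonzero (-x)
    (by simp [hsum]) ⟨j₀, Finset.mem_univ _, by simpa using hj₀⟩
  obtain ⟨t, -, ht⟩ := (isIrreducible_iff_exists_pow_pos hirr.nonneg).1 hirr i j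
  set y := |x| - x with hy_def
  have hy : (M ^ t) *ᵥ y = y := by
    rw [mulVec_sub, pow_mulVec_of_mulVec_eq_self (mulVec_abs_of_mulVec_eq_self hM hx),
      pow_mulVec_of_mulVec_eq_self hx]
  have hy0 : ∀ l, 0 ≤ (M ^ t) i l * y l := fun l =>
    mul_nonneg (pow_apply_nonneg hirr.nonneg t i l) (sub_nonneg.2 (le_abs_self (x l)))
  have hyi : y i = 0 := by simp [hy_def, abs_of_pos hi]
  have hyj : 0 < y j := by
    simp only [Pi.neg_apply, neg_pos] at hj
    simp [hy_def, abs_of_neg hj, hj]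
  have hle : (M ^ t) i j * y j ≤ y i :=
    calc (M ^ t) i j * y j ≤ ∑ l, (M ^ t) i l * y l :=
          Finset.single_le_sum (fun l _ => hy0 l) (Finset.mem_univ j)
      _ = y i := congrFun hy i
  exact (mul_pos ht hyj).not_ge (hyi ▸ hle)

theorem isUnit_one_sub_add_vecMulVec (hM : M ∈ colStochastic ℝ m) (hirr : M.IsIrreducible)
    {w : m → ℝ} (hw : ∑ i, w i = 1) : IsUnit (1 - M + vecMulVec w 1) := by
  rw [isUnit_iff_isUnit_det, isUnit_iff_ne_zero, Ne, ← exists_mulVec_eq_zero_iff]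
  rintro ⟨z, hz0, hz⟩
  have hB : (1 - M + vecMulVec w 1) *ᵥ z = z - M *ᵥ z + (1 ⬝ᵥ z) • w := by
    rw [add_mulVec, sub_mulVec, one_mulVec, vecMulVec_mulVec, op_smul_eq_smul]
  have h1B : 1 ᵥ* (1 - M + vecMulVec w 1) = 1 := by
    rw [vecMul_add, vecMul_sub, vecMul_one, one_vecMul_of_mem_colStochastic hM,
      vecMul_vecMulVec, one_dotProduct, hw, one_smul, sub_self, zero_add]
  have hsum : 1 ⬝ᵥ z = 0 := by
    rw [← h1B, ← dotProduct_mulVec, hz, dotProduct_zero]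
  rw [hB, hsum, zero_smul, add_zero, sub_eq_zero] at hz
  exact hz0 (eq_zero_of_mulVec_eq_self hM hirr hz.symm (one_dotProduct z ▸ hsum))

end Stochastic

section Projection

variable {m k R : Type*} [Fintype m] [Fintype k] [DecidableEq k] [CommRing R]
  {D : Matrix m k R} {M : Matrix k m R}

lemma isIdempotentElem_mul_inv_mul (h : IsUnit (M * D)) :
    IsIdempotentElem (D * (M * D)⁻¹ * M) := by
  have hinv : (M * D)⁻¹ * (M * D) = 1 := nonsing_inv_mul _ ((isUnit_iff_isUnit_det _).1 h)
  calc D * (M * D)⁻¹ * M * (D * (M * D)⁻¹ * M)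
      = D * ((M * D)⁻¹ * (M * D)) * (M * D)⁻¹ * M := by simp only [Matrix.mul_assoc]
    _ = D * (M * D)⁻¹ * M := by rw [hinv, Matrix.mul_one]

lemma range_mulVec_mul_inv_mul (h : IsUnit (M * D)) :
    Set.range (D * (M * D)⁻¹ * M).mulVec = Set.range D.mulVec := by
  have hinv : (M * D)⁻¹ * (M * D) = 1 := nonsing_inv_mul _ ((isUnit_iff_isUnit_det _).1 h)
  apply Set.Subset.antisymm
  · rintro _ ⟨v, rfl⟩
    exact ⟨((M * D)⁻¹ * M) *ᵥ v, by rw [mulVec_mulVec, Matrix.mul_assoc]⟩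
  · rintro _ ⟨u, rfl⟩
    refine ⟨D *ᵥ u, ?_⟩
    rw [mulVec_mulVec, Matrix.mul_assoc, Matrix.mul_assoc, hinv, Matrix.mul_one]

end Projection

end Matrix

section Coarse

variable {N n : ℕ} {f : Fin N → Fin n} {ν : Fin N → ℝ}

lemma agg_nonneg (k : Fin n) (x : Fin N) : 0 ≤ Agg f k x := by
  unfold Agg; split_ifs <;> norm_num

lemma one_vecMul_agg : 1 ᵥ* Agg f = 1 := by
  ext x
  simp [Agg, vecMul, dotProduct]

lemma agg_mulVec_apply (k : Fin n) : (Agg f *ᵥ ν) k = ∑ x with f x = k, ν x := by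
  simp [Agg, mulVec, dotProduct, Finset.sum_filter]

lemma agg_mulVec_pos (hf : Function.Surjective f) (hν : ∀ x, 0 < ν x) (k : Fin n) :
    0 < (Agg f *ᵥ ν) k := by
  obtain ⟨x, rfl⟩ := hf k
  rw [agg_mulVec_apply]
  exact Finset.sum_pos (fun y _ => hν y) ⟨x, by simp⟩

lemma sum_agg_mulVec : ∑ k, (Agg f *ᵥ ν) k = ∑ x, ν x := by
  rw [← one_dotProduct, dotProduct_mulVec, one_vecMul_agg, one_dotProduct]

lemma disagg_nonneg (hν : ∀ x, 0 ≤ ν x) (x : Fin N) (k : Fin n) : 0 ≤ Disagg f ν x k := by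
  unfold Disagg
  split_ifs
  · rw [agg_mulVec_apply]
    exact div_nonneg (hν x) (Finset.sum_nonneg fun y _ => hν y)
  · rfl

lemma one_vecMul_disagg (h : ∀ k, (Agg f *ᵥ ν) k ≠ 0) : 1 ᵥ* Disagg f ν = 1 := by
  ext k
  simp only [vecMul, dotProduct, Disagg, Pi.one_apply, one_mul]
  rw [← Finset.sum_filter, ← Finset.sum_div, ← agg_mulVec_apply, div_self (h k)]

lemma agg_mul_disagg (h : ∀ k, (Agg f *ᵥ ν) k ≠ 0) : Agg f * Disagg f ν = 1 := by
  have hentry : ∀ k l x, Agg f k x * Disagg f ν x l = if k = l then Disagg f ν x l else 0 := by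
    intro k l x
    simp only [Agg, Disagg]
    split_ifs <;> simp_all
  ext k l
  simp only [mul_apply, hentry, one_apply]
  split_ifs with hkl
  · simpa [vecMul, dotProduct] using congrFun (one_vecMul_disagg h) l
  · simp

variable {P : Matrix (Fin N) (Fin N) ℝ}

lemma coarseC_mem_colStochastic (hP : P ∈ colStochastic ℝ (Fin N))
    (hf : Function.Surjective f) (hν : ∀ x, 0 < ν x) :
    CoarseC P f ν ∈ colStochastic ℝ (Fin n) :=
  have hAν : ∀ k, (Agg f *ᵥ ν) k ≠ 0 := fun k => (agg_mulVec_pos hf hν k).ne'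
  ⟨mul_apply_nonneg (mul_apply_nonneg agg_nonneg fun _ _ => nonneg_of_mem_colStochastic hP)
      (disagg_nonneg fun x => (hν x).le),
    by rw [CoarseC, ← vecMul_vecMul, ← vecMul_vecMul, one_vecMul_agg,
      one_vecMul_of_mem_colStochastic hP, one_vecMul_disagg hAν]⟩

lemma coarseC_apply_pos (hP : ∀ a b, 0 ≤ P a b) (hf : Function.Surjective f)
    (hν : ∀ x, 0 < ν x) {a b : Fin N} (hab : 0 < P a b) : 0 < CoarseC P f ν (f a) (f b) := by
  have hAP : 0 < (Agg f * P) (f a) b :=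
    Finset.sum_pos' (fun x _ => mul_nonneg (agg_nonneg _ _) (hP x b))
      ⟨a, Finset.mem_univ _, by simpa [Agg] using hab⟩
  have hD : 0 < Disagg f ν b (f b) := by
    simpa [Disagg] using div_pos (hν b) (agg_mulVec_pos hf hν (f b))
  rw [CoarseC, mul_apply]
  exact Finset.sum_pos'
    (fun y _ => mul_nonneg (mul_apply_nonneg agg_nonneg hP _ _)
      (disagg_nonneg (fun x => (hν x).le) _ _))
    ⟨b, Finset.mem_univ _, mul_pos hAP hD⟩

lemma coarseC_isIrreducible (hP : P.IsIrreducible) (hPs : P ∈ colStochastic ℝ (Fin N))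
    (hf : Function.Surjective f) (hν : ∀ x, 0 < ν x) : (CoarseC P f ν).IsIrreducible :=
  hP.of_surjective
    (fun _ _ => nonneg_of_mem_colStochastic (coarseC_mem_colStochastic hPs hf hν)) hf
    fun _ _ => coarseC_apply_pos hP.nonneg hf hν

lemma agg_mul_mul_disagg (μ : Fin N → ℝ) (h : ∀ k, (Agg f *ᵥ ν) k ≠ 0) :
    Agg f * (1 - P + vecMulVec μ 1) * Disagg f ν =
      1 - CoarseC P f ν + vecMulVec (Agg f *ᵥ μ) 1 := by
  rw [Matrix.mul_add, Matrix.mul_sub, Matrix.add_mul, Matrix.sub_mul, Matrix.mul_one,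
    agg_mul_disagg h, mul_vecMulVec, vecMulVec_mul, one_vecMul_disagg h, CoarseC]

end Coarse

theorem stmt9_general {N n : ℕ} (P : Matrix (Fin N) (Fin N) ℝ)
    (μ : Fin N → ℝ) (hP : ColStoch P) (hirr : Irred P)
    (hμsum : ∑ i, μ i = 1)
    (f : Fin N → Fin n) (hf : Function.Surjective f)
    (ν : Fin N → ℝ) (hνpos : ∀ i, 0 < ν i) :
    IsUnit (Agg f * (1 - P + vecMulVec μ 1) * Disagg f ν) ∧
      CoarseS P f μ ν * CoarseS P f μ ν = CoarseS P f μ ν ∧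
      Set.range (CoarseS P f μ ν).mulVec = Set.range (Disagg f ν).mulVec := by
  have hPs := hP.mem_colStochastic
  have hunit : IsUnit (Agg f * (1 - P + vecMulVec μ 1) * Disagg f ν) := by
    rw [agg_mul_mul_disagg μ fun k => (agg_mulVec_pos hf hνpos k).ne']
    exact isUnit_one_sub_add_vecMulVec (coarseC_mem_colStochastic hPs hf hνpos)
      (coarseC_isIrreducible (hirr.isIrreducible hP.1) hPs hf hνpos)
      (by rw [sum_agg_mulVec, hμsum])
  exact ⟨hunit, isIdempotentElem_mul_inv_mul hunit, range_mulVec_mul_inv_mul hunit⟩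

/-- `A(I-P+μ𝟙ᵀ)D(ν)` is invertible, and the coarse projection
`S(ν) = D(ν)[A(I-P+μ𝟙ᵀ)D(ν)]⁻¹A(I-P+μ𝟙ᵀ)` is a projection with range `rg D(ν)`. -/
theorem stmt9 {N n : ℕ} (P : Matrix (Fin N) (Fin N) ℝ)
    (μ : Fin N → ℝ) (hP : ColStoch P) (hirr : Irred P)
    (hμpos : ∀ i, 0 < μ i) (hμsum : ∑ i, μ i = 1) (hinv : P.mulVec μ = μ)
    (f : Fin N → Fin n) (hf : Function.Surjective f)
    (ν : Fin N → ℝ) (hνpos : ∀ i, 0 < ν i) (hνsum : ∑ i, ν i = 1) :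
    IsUnit (Agg f * (1 - P + vecMulVec μ 1) * Disagg f ν) ∧
      CoarseS P f μ ν * CoarseS P f μ ν = CoarseS P f μ ν ∧
      Set.range (CoarseS P f μ ν).mulVec = Set.range (Disagg f ν).mulVec :=
  stmt9_general P μ hP hirr hμsum f hf ν hνpos
end
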